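/- The pair of sequences (α_{n₁,n₂}, β_{n₁,n₂}) defined by α_{0,0} = 1, α_{n₁,n₂} = (-1)^n q^{n(3n-1)/2}(1+q^n) if n₁ = n₂ = n ≥ 1, and α_{n₁,n₂} = 0 otherwise, and β_{n₁,n₂} = 1/((q;q)_{n₁}(q;q)_{n₂}(q;q)_{n₁+n₂}), forms a 2-fold Bailey pair with respect to a₁ = a₂ = 1; that is, for all n₁, n₂ ≥ 0: β_{n₁,n₂} = Σ_{r₁=0}^{n₁} Σ_{r₂=0}^{n₂} α_{r₁,r₂} / ((q;q)_{n₁+r₁}(q;q)_{n₁-r₁}(q;q)_{n₂+r₂}(q;q)_{n₂-r₂}). -/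

import Mathlib

open scoped BigOperators

/-- The finite q-Pochhammer symbol `(x;q)_n = ∏_{k=0}^{n-1} (1 - x q^k)`. -/
noncomputable def qPoch (x q : ℂ) (n : ℕ) : ℂ := ∏ k ∈ Finset.range n, (1 - x * q ^ k)

/-- The infinite q-Pochhammer symbol `(x;q)_∞ = ∏_{k≥0} (1 - x q^k)`. -/
noncomputable def qPochInf (x q : ℂ) : ℂ := ∏' k : ℕ, (1 - x * q ^ k)

/-- `p(n)`, the number of partitions of `n`. -/
def partitionCount (n : ℕ) : ℕ := Fintype.card (Nat.Partition n)

/-- The smallest part of a partition (0 for the empty partition). -/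
def minPart {n : ℕ} (P : Nat.Partition n) : ℕ := (P.parts.sort (· ≤ ·)).headD 0

/-- The rank of a partition: largest part minus number of parts. -/
def rank {n : ℕ} (P : Nat.Partition n) : ℤ := (P.parts.sup : ℤ) - P.parts.card

/-- `N(m,n)`, the number of partitions of `n` with rank `m`. -/
def rankCount (m : ℤ) (n : ℕ) : ℕ := Fintype.card {P : Nat.Partition n // rank P = m}

/-- Dyson's crank of a partition. -/
def crank {n : ℕ} (P : Nat.Partition n) : ℤ :=
  let ω := P.parts.count 1
  if ω = 0 then (P.parts.sup : ℤ)
  else ((P.parts.filter (fun x => ω < x)).card : ℤ) - ω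

/-- `M(m,n)`, the number of partitions of `n` with crank `m`. -/
def crankCount (m : ℤ) (n : ℕ) : ℕ := Fintype.card {P : Nat.Partition n // crank P = m}

/-- `spt(n)`: total number of appearances of the smallest part in all partitions of `n`. -/
def spt (n : ℕ) : ℕ := ∑ P : Nat.Partition n, P.parts.count (minPart P)

/- ### Auxiliary machinery -/

lemma one_sub_pow_ne_zero (q : ℂ) (hq : ‖q‖ < 1) (k : ℕ) (hk : k ≠ 0) : 1 - q ^ k ≠ 0 := by
  intro h
  have h1 : q ^ k = 1 := (sub_eq_zero.mp h).symm
  have h2 : ‖q‖ ^ k < 1 := pow_lt_one₀ (norm_nonneg q) hq hk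
  rw [← norm_pow, h1] at h2
  simp at h2

lemma qPoch_succ (q : ℂ) (n : ℕ) : qPoch q q (n+1) = qPoch q q n * (1 - q ^ (n+1)) := by
  rw [qPoch, Finset.prod_range_succ, ← qPoch, pow_succ']

lemma qPoch_ne_zero (q : ℂ) (hq : ‖q‖ < 1) (n : ℕ) : qPoch q q n ≠ 0 := by
  rw [qPoch]
  apply Finset.prod_ne_zero_iff.mpr
  intro k _
  rw [← pow_succ']
  exact one_sub_pow_ne_zero q hq (k+1) (Nat.succ_ne_zero k)

noncomputable def alphaT (q : ℂ) (r : ℕ) : ℂ :=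
  if r = 0 then 1 else (-1 : ℂ) ^ r * q ^ (r * (3 * r - 1) / 2) * (1 + q ^ r)

noncomputable def T (q : ℂ) (n₁ n₂ r : ℕ) : ℂ :=
  alphaT q r /
    (qPoch q q (n₁ + r) * qPoch q q (n₁ - r) * qPoch q q (n₂ + r) * qPoch q q (n₂ - r))

noncomputable def Gc (q : ℂ) (n₁ n₂ r : ℕ) : ℂ :=
  if r = 0 then 0 else
    (-1 : ℂ) ^ r * q ^ (r * (3 * r - 1) / 2) * q ^ (n₂ + 1 - r) * (1 - q ^ (n₁ + r)) /
      ((1 - q ^ (n₂ + 1)) * (1 - q ^ (n₁ + n₂ + 1)) *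
        (qPoch q q (n₁ - r) * qPoch q q (n₁ + r) * qPoch q q (n₂ + 1 - r) * qPoch q q (n₂ + r)))

lemma term0 (q : ℂ) (hq : ‖q‖ < 1) (a n₂ : ℕ) :
    T q (a+1) (n₂+1) 0 -
      (1 / ((1 - q ^ (n₂+1)) * (1 - q ^ ((a+1) + n₂ + 1)))) * T q (a+1) n₂ 0
      = Gc q (a+1) n₂ 0 - Gc q (a+1) n₂ 1 := by
  simp only [T, Gc, alphaT, reduceIte, Nat.add_zero, Nat.sub_zero,
    show (a+1) - 1 = a from by omega, show n₂ + 1 - 1 = n₂ from by omega,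
    show 1 * (3 * 1 - 1) / 2 = 1 from by norm_num, pow_one]
  have h1 := one_sub_pow_ne_zero q hq (a+1) (by omega)
  have h2 := one_sub_pow_ne_zero q hq (a+1+1) (by omega)
  have h3 := one_sub_pow_ne_zero q hq (n₂+1) (by omega)
  have h4 := one_sub_pow_ne_zero q hq (a+1+n₂+1) (by omega)
  have h5 := qPoch_ne_zero q hq a
  have h6 := qPoch_ne_zero q hq n₂
  have h7 := qPoch_ne_zero q hq (a+1)
  have h8 := qPoch_ne_zero q hq (a+1+1)
  have h9 := qPoch_ne_zero q hq (n₂+1)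
  rw [if_neg one_ne_zero]
  rw [qPoch_succ q (a+1), qPoch_succ q a, qPoch_succ q n₂]
  field_simp
  ring

lemma termS (q : ℂ) (hq : ‖q‖ < 1) (s a b : ℕ) :
    T q (s+2+a) (s+1+b+1) (s+1) -
      (1 / ((1 - q ^ (s+1+b+1)) * (1 - q ^ (s+2+a+(s+1+b)+1)))) * T q (s+2+a) (s+1+b) (s+1)
      = Gc q (s+2+a) (s+1+b) (s+1) - Gc q (s+2+a) (s+1+b) (s+1+1) := by
  have hE : (s+1+1)*(3*(s+1+1)-1)/2 = (s+1)*(3*(s+1)-1)/2 + (3*s+4) := by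
    rw [show 3*(s+1+1)-1 = 3*s+5 from by omega, show 3*(s+1)-1 = 3*s+2 from by omega,
      show (s+1+1)*(3*s+5) = (s+1)*(3*s+2) + (3*s+4)*2 from by ring,
      Nat.add_mul_div_right _ _ (by norm_num : (0:ℕ) < 2)]
  simp only [T, Gc, alphaT, if_neg (show ¬(s+1 = 0) from by omega),
    if_neg (show ¬(s+1+1 = 0) from by omega),
    show s+2+a+(s+1) = 2*s+3+a from by omega,
    show s+2+a-(s+1) = a+1 from by omega,
    show s+1+b+1+(s+1) = 2*s+2+b+1 from by omega,
    show s+1+b+1-(s+1) = b+1 from by omega,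
    show s+1+b+(s+1) = 2*s+2+b from by omega,
    show s+1+b-(s+1) = b from by omega,
    show s+1+b+1-(s+1+1) = b from by omega,
    show s+2+a+(s+1+1) = 2*s+3+a+1 from by omega,
    show s+2+a-(s+1+1) = a from by omega,
    show s+1+b+(s+1+1) = 2*s+2+b+1 from by omega,
    hE, pow_add]
  have h1 : 1 - q^(a+1) ≠ 0 := one_sub_pow_ne_zero q hq (a+1) (by omega)
  have h2 : 1 - q^(b+1) ≠ 0 := one_sub_pow_ne_zero q hq (b+1) (by omega)
  have h3 : 1 - q^(2*s+3+a+1) ≠ 0 := one_sub_pow_ne_zero q hq (2*s+3+a+1) (by omega)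
  have h4 : 1 - q^(2*s+2+b+1) ≠ 0 := one_sub_pow_ne_zero q hq (2*s+2+b+1) (by omega)
  have hC1 : 1 - q^s*q^1*q^b*q^1 ≠ 0 := by
    rw [show q^s*q^1*q^b*q^1 = q^(s+1+b+1) from by rw [pow_add, pow_add, pow_add]]
    exact one_sub_pow_ne_zero q hq _ (by omega)
  have hC2 : 1 - q^s*q^2*q^a*(q^s*q^1*q^b)*q^1 ≠ 0 := by
    rw [show q^s*q^2*q^a*(q^s*q^1*q^b)*q^1 = q^(s+2+a+(s+1+b)+1) from by
      simp only [pow_add]]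
    exact one_sub_pow_ne_zero q hq _ (by omega)
  have h7 := qPoch_ne_zero q hq a
  have h8 := qPoch_ne_zero q hq b
  have h9 := qPoch_ne_zero q hq (2*s+3+a)
  have h10 := qPoch_ne_zero q hq (2*s+2+b)
  have h11 := qPoch_ne_zero q hq (a+1)
  have h12 := qPoch_ne_zero q hq (b+1)
  have h13 := qPoch_ne_zero q hq (2*s+3+a+1)
  have h14 := qPoch_ne_zero q hq (2*s+2+b+1)
  have hD1 : qPoch q q (2*s+3+a) * qPoch q q (a+1) * qPoch q q (2*s+2+b+1) * qPoch q q (b+1) ≠ 0 := by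
    apply_rules [mul_ne_zero]
  have hC : (1 - q^s*q^1*q^b*q^1) * (1 - q^s*q^2*q^a*(q^s*q^1*q^b)*q^1) ≠ 0 :=
    mul_ne_zero hC1 hC2
  have hD2 : qPoch q q (2*s+3+a) * qPoch q q (a+1) * qPoch q q (2*s+2+b) * qPoch q q b ≠ 0 := by
    apply_rules [mul_ne_zero]
  have hD3 : (1 - q^s*q^1*q^b*q^1) * (1 - q^s*q^2*q^a*(q^s*q^1*q^b)*q^1) *
      (qPoch q q (a+1) * qPoch q q (2*s+3+a) * qPoch q q (b+1) * qPoch q q (2*s+2+b)) ≠ 0 := by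
    apply_rules [mul_ne_zero]
  have hD4 : (1 - q^s*q^1*q^b*q^1) * (1 - q^s*q^2*q^a*(q^s*q^1*q^b)*q^1) *
      (qPoch q q a * qPoch q q (2*s+3+a+1) * qPoch q q b * qPoch q q (2*s+2+b+1)) ≠ 0 := by
    apply_rules [mul_ne_zero]
  rw [div_mul_div_comm, div_sub_div _ _ hD1 (mul_ne_zero hC hD2), div_sub_div _ _ hD3 hD4,
    div_eq_div_iff (mul_ne_zero hD1 (mul_ne_zero hC hD2)) (mul_ne_zero hD3 hD4)]
  rw [qPoch_succ q a, qPoch_succ q b, qPoch_succ q (2*s+3+a), qPoch_succ q (2*s+2+b)]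
  ring

lemma termTop (q : ℂ) (hq : ‖q‖ < 1) (n₂ d : ℕ) :
    Gc q (n₂+1+d) n₂ (n₂+1) = T q (n₂+1+d) (n₂+1) (n₂+1) := by
  simp only [T, Gc, alphaT, if_neg (show ¬(n₂+1 = 0) from by omega),
    show n₂+1+d+(n₂+1) = 2*n₂+2+d from by omega,
    show n₂+1+d-(n₂+1) = d from by omega,
    show n₂+1-(n₂+1) = 0 from by omega,
    show n₂+(n₂+1) = 2*n₂+1 from by omega,
    show n₂+1+(n₂+1) = 2*n₂+1+1 from by omega,
    show n₂+1+d+n₂+1 = 2*n₂+2+d from by omega,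
    pow_zero, show qPoch q q 0 = 1 from rfl, mul_one, one_mul]
  have h1 : 1 - q^(n₂+1) ≠ 0 := one_sub_pow_ne_zero q hq _ (by omega)
  have h2 : 1 - q^(2*n₂+2+d) ≠ 0 := one_sub_pow_ne_zero q hq _ (by omega)
  have h3 : 1 - q^(2*n₂+1+1) ≠ 0 := one_sub_pow_ne_zero q hq _ (by omega)
  have h4 := qPoch_ne_zero q hq d
  have h5 := qPoch_ne_zero q hq (2*n₂+2+d)
  have h6 := qPoch_ne_zero q hq (2*n₂+1)
  rw [qPoch_succ q (2*n₂+1)]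
  rw [div_eq_div_iff (by apply_rules [mul_ne_zero]) (by apply_rules [mul_ne_zero])]
  ring

lemma term_step (q : ℂ) (hq : ‖q‖ < 1) (n₁ n₂ r : ℕ) (hr : r ≤ n₂) (hn : n₂ + 1 ≤ n₁) :
    T q n₁ (n₂+1) r - (1 / ((1 - q ^ (n₂+1)) * (1 - q ^ (n₁+n₂+1)))) * T q n₁ n₂ r
      = Gc q n₁ n₂ r - Gc q n₁ n₂ (r+1) := by
  match r with
  | 0 =>
    obtain ⟨a, rfl⟩ : ∃ a, n₁ = a + 1 := ⟨n₁ - 1, by omega⟩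
    exact term0 q hq a n₂
  | (s+1) =>
    obtain ⟨b, rfl⟩ : ∃ b, n₂ = s+1+b := ⟨n₂-(s+1), by omega⟩
    obtain ⟨a, rfl⟩ : ∃ a, n₁ = s+2+a := ⟨n₁-(s+2), by omega⟩
    exact termS q hq s a b

lemma T_symm (q : ℂ) (n₁ n₂ r : ℕ) : T q n₁ n₂ r = T q n₂ n₁ r := by
  unfold T; ring

lemma key (q : ℂ) (hq : ‖q‖ < 1) : ∀ n₂ n₁ : ℕ, n₂ ≤ n₁ →
    ∑ r ∈ Finset.range (n₂+1), T q n₁ n₂ r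
      = 1 / (qPoch q q n₁ * qPoch q q n₂ * qPoch q q (n₁+n₂)) := by
  intro n₂
  induction n₂ with
  | zero =>
    intro n₁ _
    norm_num [Finset.sum_range_one, T, alphaT, show qPoch q q 0 = 1 from rfl]
  | succ n₂ ih =>
    intro n₁ hn
    have hstep : ∑ r ∈ Finset.range (n₂+1),
        (T q n₁ (n₂+1) r - (1/((1-q^(n₂+1))*(1-q^(n₁+n₂+1)))) * T q n₁ n₂ r)
        = Gc q n₁ n₂ 0 - Gc q n₁ n₂ (n₂+1) := by
      rw [← Finset.sum_range_sub' (fun r => Gc q n₁ n₂ r) (n₂+1)]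
      refine Finset.sum_congr rfl ?_
      intro r hr
      exact term_step q hq n₁ n₂ r (by
        have := Finset.mem_range.mp hr; omega) hn
    have hG0 : Gc q n₁ n₂ 0 = 0 := by simp [Gc]
    have hGtop : Gc q n₁ n₂ (n₂+1) = T q n₁ (n₂+1) (n₂+1) := by
      obtain ⟨d, rfl⟩ : ∃ d, n₁ = n₂+1+d := ⟨n₁-(n₂+1), by omega⟩
      exact termTop q hq n₂ d
    have hIH := ih n₁ (by omega)
    rw [Finset.sum_sub_distrib, ← Finset.mul_sum, hG0, hGtop, zero_sub] at hstep
    have hc1 : 1 - q^(n₂+1) ≠ 0 := one_sub_pow_ne_zero q hq _ (by omega)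
    have hc2 : 1 - q^(n₁+n₂+1) ≠ 0 := one_sub_pow_ne_zero q hq _ (by omega)
    have hP1 := qPoch_ne_zero q hq n₁
    have hP2 := qPoch_ne_zero q hq n₂
    have hP3 := qPoch_ne_zero q hq (n₁+n₂)
    have hclosed : (1/((1-q^(n₂+1))*(1-q^(n₁+n₂+1)))) *
        (1 / (qPoch q q n₁ * qPoch q q n₂ * qPoch q q (n₁+n₂)))
        = 1 / (qPoch q q n₁ * qPoch q q (n₂+1) * qPoch q q (n₁+(n₂+1))) := by
      rw [show n₁+(n₂+1) = (n₁+n₂)+1 from by omega, qPoch_succ q (n₁+n₂), qPoch_succ q n₂]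
      rw [div_mul_div_comm, div_eq_div_iff (by apply_rules [mul_ne_zero])
        (by apply_rules [mul_ne_zero])]
      ring
    rw [Finset.sum_range_succ]
    linear_combination hstep + (1/((1-q^(n₂+1))*(1-q^(n₁+n₂+1)))) * hIH + hclosed

/-- The Joshi–Vyas pair `(α,β)` is a 2-fold Bailey pair with respect to `a₁ = a₂ = 1`. -/
theorem joshi_vyas_two_fold_bailey_pair (q : ℂ) (hq : ‖q‖ < 1) (n₁ n₂ : ℕ) :
    1 / (qPoch q q n₁ * qPoch q q n₂ * qPoch q q (n₁ + n₂)) =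
      ∑ r₁ ∈ Finset.range (n₁ + 1), ∑ r₂ ∈ Finset.range (n₂ + 1),
        (if r₁ = r₂ then
            (if r₁ = 0 then 1
             else (-1 : ℂ) ^ r₁ * q ^ (r₁ * (3 * r₁ - 1) / 2) * (1 + q ^ r₁))
          else 0) /
        (qPoch q q (n₁ + r₁) * qPoch q q (n₁ - r₁) *
          qPoch q q (n₂ + r₂) * qPoch q q (n₂ - r₂)) := by
  have hred : (∑ r₁ ∈ Finset.range (n₁ + 1), ∑ r₂ ∈ Finset.range (n₂ + 1),
      (if r₁ = r₂ then
          (if r₁ = 0 then 1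
           else (-1 : ℂ) ^ r₁ * q ^ (r₁ * (3 * r₁ - 1) / 2) * (1 + q ^ r₁))
        else 0) /
      (qPoch q q (n₁ + r₁) * qPoch q q (n₁ - r₁) *
        qPoch q q (n₂ + r₂) * qPoch q q (n₂ - r₂)))
      = ∑ r ∈ Finset.range (min n₁ n₂ + 1), T q n₁ n₂ r := by
    calc (∑ r₁ ∈ Finset.range (n₁ + 1), ∑ r₂ ∈ Finset.range (n₂ + 1), _)
        = ∑ r₁ ∈ Finset.range (n₁ + 1),
            (if r₁ ∈ Finset.range (n₂+1) then T q n₁ n₂ r₁ else 0) := by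
          refine Finset.sum_congr rfl ?_
          intro r₁ _
          simp only [T]
          rw [← Finset.sum_ite_eq (Finset.range (n₂+1)) r₁
            (fun r₂ => alphaT q r₁ / (qPoch q q (n₁+r₁) * qPoch q q (n₁-r₁) *
              qPoch q q (n₂+r₂) * qPoch q q (n₂-r₂)))]
          refine Finset.sum_congr rfl ?_
          intro r₂ _
          by_cases h : r₁ = r₂
          · subst h; simp [alphaT]
          · simp [h]
      _ = ∑ r ∈ Finset.range (n₁+1) ∩ Finset.range (n₂+1), T q n₁ n₂ r := by
          rw [Finset.sum_ite_mem]
      _ = ∑ r ∈ Finset.range (min n₁ n₂ + 1), T q n₁ n₂ r := by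
          congr 1
          ext x
          simp only [Finset.mem_inter, Finset.mem_range]
          omega
  rw [hred]
  rcases le_total n₂ n₁ with h | h
  · rw [min_eq_right h]
    exact (key q hq n₂ n₁ h).symm
  · rw [min_eq_left h]
    calc 1 / (qPoch q q n₁ * qPoch q q n₂ * qPoch q q (n₁ + n₂))
        = 1 / (qPoch q q n₂ * qPoch q q n₁ * qPoch q q (n₂ + n₁)) := by
          rw [Nat.add_comm n₁ n₂]; ring_nf
      _ = ∑ r ∈ Finset.range (n₁+1), T q n₂ n₁ r := (key q hq n₁ n₂ h).symm
      _ = ∑ r ∈ Finset.range (n₁+1), T q n₁ n₂ r :=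
          Finset.sum_congr rfl (fun r _ => T_symm q n₂ n₁ r)
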